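/- Let J_m ⊆ GL_2(F) be the set of matrices (a b; c d) with a,d ∈ 1+p_F^m, b ∈ p_F^{-m}, c ∈ p_F^{3m}. Then every element of J_m factors uniquely as j = u·p with u ∈ J_m^u = J_m ∩ U (upper unitriangular with entry in p_F^{-m}) and p ∈ J_m ∩ B̄, where B̄ is the group of lower triangular invertible matrices; moreover J_m ∩ B̄ ⊆ K_m. -/

import Mathlib

open Matrix

/-- An abstract (normalized) discrete valuation on a field `F`, together with a choice of
uniformizer `ϖ`.  This models a non-archimedean local field. -/
structure DiscValuation (F : Type) [Field F] where
  v : F → ℤ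
  v_mul : ∀ x y : F, x ≠ 0 → y ≠ 0 → v (x * y) = v x + v y
  v_add : ∀ x y : F, x ≠ 0 → y ≠ 0 → x + y ≠ 0 → min (v x) (v y) ≤ v (x + y)
  ϖ : F
  ϖ_ne_zero : ϖ ≠ 0
  v_ϖ : v ϖ = 1

/-- Membership in the fractional ideal `𝔭_F^n = {x : v x ≥ n}` (in particular,
`mem 0` is the ring of integers `o_F`). -/
def DiscValuation.mem {F : Type} [Field F] (V : DiscValuation F) (n : ℤ) (x : F) : Prop :=
  x = 0 ∨ n ≤ V.v x

/-
With `g = !![a, b; c, d]`, the only candidate is `u = !![1, b / d; 0, 1]` and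
`p = !![a - b c / d, 0; c, d]`, forced by comparing the right column of `g = u p`.
Everything then rests on `d ∈ 1 + 𝔭^m` being a unit (strict ultrametric inequality),
so that `b / d ∈ 𝔭^{-m}` and `b c / d ∈ 𝔭^{2m} ⊆ 𝔭^m`.
-/

namespace DiscValuation

variable {F : Type} [Field F] (V : DiscValuation F)

lemma v_one : V.v 1 = 0 := by
  have h := V.v_mul 1 1 one_ne_zero one_ne_zero
  rw [one_mul] at h
  omega

lemma v_neg {x : F} (hx : x ≠ 0) : V.v (-x) = V.v x := by
  have hsq := V.v_mul (-1) (-1) (neg_ne_zero.mpr one_ne_zero) (neg_ne_zero.mpr one_ne_zero)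
  rw [neg_mul_neg, one_mul, V.v_one] at hsq
  rw [← neg_one_mul, V.v_mul _ _ (neg_ne_zero.mpr one_ne_zero) hx]
  omega

lemma v_inv {x : F} (hx : x ≠ 0) : V.v x⁻¹ = -V.v x := by
  have h := V.v_mul x x⁻¹ hx (inv_ne_zero hx)
  rw [mul_inv_cancel₀ hx, V.v_one] at h
  omega

lemma v_add_eq_left_of_lt {x y : F} (hx : x ≠ 0) (hy : y ≠ 0) (hxy : V.v x < V.v y) :
    x + y ≠ 0 ∧ V.v (x + y) = V.v x := by
  have hsum : x + y ≠ 0 := by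
    intro h
    rw [← neg_eq_of_add_eq_zero_right h, V.v_neg hx] at hxy
    exact hxy.false
  have hge := V.v_add x y hx hy hsum
  have hle := V.v_add (x + y) (-y) hsum (neg_ne_zero.mpr hy) (by simpa using hx)
  rw [add_neg_cancel_right, V.v_neg hy] at hle
  exact ⟨hsum, by omega⟩

lemma ne_zero_and_v_eq_zero_of_mem_sub_one {n : ℤ} (hn : 1 ≤ n) {x : F}
    (h : V.mem n (x - 1)) : x ≠ 0 ∧ V.v x = 0 := by
  rcases eq_or_ne (x - 1) 0 with h0 | h0
  · rw [sub_eq_zero.mp h0]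
    exact ⟨one_ne_zero, V.v_one⟩
  have hlt : V.v 1 < V.v (x - 1) := by
    rw [V.v_one]
    exact lt_of_lt_of_le one_pos (le_trans hn (h.resolve_left h0))
  simpa [V.v_one] using V.v_add_eq_left_of_lt one_ne_zero h0 hlt

lemma mem_zero (n : ℤ) : V.mem n 0 := Or.inl rfl

variable {V}

lemma mem.mono {n k : ℤ} (h : n ≤ k) {x : F} (hx : V.mem k x) : V.mem n x :=
  hx.imp_right h.trans

lemma mem.neg {n : ℤ} {x : F} (hx : V.mem n x) : V.mem n (-x) := by
  rcases eq_or_ne x 0 with h0 | h0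
  · exact Or.inl (by rw [h0, neg_zero])
  · exact Or.inr (by rw [V.v_neg h0]; exact hx.resolve_left h0)

lemma mem.add {n : ℤ} {x y : F} (hx : V.mem n x) (hy : V.mem n y) : V.mem n (x + y) := by
  rcases eq_or_ne x 0 with hx0 | hx0
  · rwa [hx0, zero_add]
  rcases eq_or_ne y 0 with hy0 | hy0
  · rwa [hy0, add_zero]
  rcases eq_or_ne (x + y) 0 with hxy | hxy
  · exact Or.inl hxy
  exact Or.inr ((le_min (hx.resolve_left hx0) (hy.resolve_left hy0)).trans
    (V.v_add x y hx0 hy0 hxy))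

lemma mem.sub {n : ℤ} {x y : F} (hx : V.mem n x) (hy : V.mem n y) : V.mem n (x - y) := by
  rw [sub_eq_add_neg]
  exact hx.add hy.neg

lemma mem.mul {n k : ℤ} {x y : F} (hx : V.mem n x) (hy : V.mem k y) :
    V.mem (n + k) (x * y) := by
  rcases eq_or_ne x 0 with hx0 | hx0
  · exact Or.inl (by rw [hx0, zero_mul])
  rcases eq_or_ne y 0 with hy0 | hy0
  · exact Or.inl (by rw [hy0, mul_zero])
  exact Or.inr (by
    rw [V.v_mul x y hx0 hy0]
    exact add_le_add (hx.resolve_left hx0) (hy.resolve_left hy0))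

lemma mem.div_of_v_eq_zero {n : ℤ} {x d : F} (hx : V.mem n x) (hd : d ≠ 0)
    (hv : V.v d = 0) : V.mem n (x / d) := by
  have hinv : V.mem 0 d⁻¹ := Or.inr (by rw [V.v_inv hd, hv, neg_zero])
  simpa [div_eq_mul_inv] using hx.mul hinv

end DiscValuation

lemma eq_unipotent_mul_lower_iff {F : Type} [Field F] {g q : Matrix (Fin 2) (Fin 2) F} {x : F}
    (hd : g 1 1 ≠ 0) :
    (q 0 1 = 0 ∧ g = !![1, x; 0, 1] * q) ↔
      x = g 0 1 / g 1 1 ∧ q = !![g 0 0 - x * g 1 0, 0; g 1 0, g 1 1] := by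
  conv_lhs => rw [eta_fin_two g, eta_fin_two q]
  conv_rhs => rw [eta_fin_two q]
  simp only [mul_fin_two, of_apply, cons_val', cons_val_one, cons_val_fin_one, cons_val_zero,
    EmbeddingLike.apply_eq_iff_eq, vecCons_inj, and_true]
  grind

lemma sub_one_fin_two {R : Type} [Ring R] (p : Matrix (Fin 2) (Fin 2) R) :
    p - 1 = !![p 0 0 - 1, p 0 1; p 1 0, p 1 1 - 1] := by
  rw [eta_fin_two p, one_fin_two]
  simp

/-- every element of `J_m` factors uniquely as `j = u·p` with
`u = u(x)`, `x ∈ 𝔭^{-m}` (so `u ∈ J_m ∩ U`), and `p ∈ J_m ∩ B̄` lower triangular;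
moreover `J_m ∩ B̄ ⊆ K_m`. -/
theorem Jm_factorization (F : Type) [Field F] (V : DiscValuation F)
    (m : ℕ) (hm : 1 ≤ m)
    (J : Set (Matrix (Fin 2) (Fin 2) F))
    (hJ : J = {g : Matrix (Fin 2) (Fin 2) F |
      V.mem (m : ℤ) (g 0 0 - 1) ∧ V.mem (-(m : ℤ)) (g 0 1) ∧
      V.mem (3 * (m : ℤ)) (g 1 0) ∧ V.mem (m : ℤ) (g 1 1 - 1)}) :
    (∀ g ∈ J, ∃! up : F × Matrix (Fin 2) (Fin 2) F,
      V.mem (-(m : ℤ)) up.1 ∧ up.2 ∈ J ∧ up.2 0 1 = 0 ∧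
        g = !![1, up.1; 0, 1] * up.2) ∧
    (∀ p ∈ J, p 0 1 = 0 → ∀ i j, V.mem (m : ℤ) ((p - 1) i j)) := by
  subst hJ
  refine ⟨fun g ⟨ha, hb, hc, hd⟩ => ?_, fun p ⟨ha, _, hc, hd⟩ h01 => ?_⟩
  · obtain ⟨hd0, hdv⟩ := V.ne_zero_and_v_eq_zero_of_mem_sub_one (by exact_mod_cast hm) hd
    set x := g 0 1 / g 1 1
    have hx : V.mem (-(m : ℤ)) x := hb.div_of_v_eq_zero hd0 hdv
    have hxc : V.mem (m : ℤ) (x * g 1 0) := (hx.mul hc).mono (by omega)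
    refine ⟨(x, !![g 0 0 - x * g 1 0, 0; g 1 0, g 1 1]), ⟨hx, ?_, ?_⟩, ?_⟩
    · refine ⟨?_, V.mem_zero _, hc, hd⟩
      simpa [sub_right_comm] using ha.sub hxc
    · exact (eq_unipotent_mul_lower_iff hd0).mpr ⟨rfl, rfl⟩
    · rintro ⟨y, q⟩ ⟨-, -, hfac⟩
      obtain ⟨hy, hq⟩ := (eq_unipotent_mul_lower_iff hd0).mp hfac
      dsimp only at hy hq
      subst hy hq
      rfl
  · rw [sub_one_fin_two, h01]
    have hc' : V.mem (m : ℤ) (p 1 0) := hc.mono (by omega)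
    simp only [Fin.forall_fin_two, of_apply, cons_val', cons_val_zero, cons_val_one,
      cons_val_fin_one]
    exact ⟨⟨ha, V.mem_zero _⟩, hc', hd⟩
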